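/- arXiv:q-alg/9708020 — 2 statements merged into one kernel-verified Lean document; each statement's English description precedes it below -/
import Mathlib

section
/- Let k be a commutative ring, A a commutative unital associative k-algebra, and * a formal star product on A with first-order term B₁. Define the bracket {f,g} := B₁(f,g) − B₁(g,f) for f, g ∈ A. Then { , } satisfies the Jacobi identity: for all f, g, h ∈ A, {f,{g,h}} + {g,{h,f}} + {h,{f,g}} = 0. -/
/-- A formal star product on a commutative unital `k`-algebra `A`: an associative,
`k[[ℏ]]`-bilinear product on `A[[ℏ]] = PowerSeries A`, determined on constant series by a
sequence of `k`-bilinear maps `B n : A → A → A` via `f * g = Σ_{n≥0} ℏⁿ Bₙ(f,g)`,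
with zeroth term the original commutative product. -/
structure FormalStarProduct (k A : Type*) [CommRing k] [CommRing A] [Algebra k A] where
  /-- the star product on `A[[ℏ]]` -/
  smul' : PowerSeries A → PowerSeries A → PowerSeries A
  /-- the sequence of `k`-bilinear maps `Bₙ` -/
  B : ℕ → A →ₗ[k] A →ₗ[k] A
  add_left : ∀ f g h : PowerSeries A, smul' (f + g) h = smul' f h + smul' g h
  add_right : ∀ f g h : PowerSeries A, smul' f (g + h) = smul' f g + smul' f h
  hbar_smul_left : ∀ (c : PowerSeries k) (f g : PowerSeries A),
      smul' (c • f) g = c • smul' f g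
  hbar_smul_right : ∀ (c : PowerSeries k) (f g : PowerSeries A),
      smul' f (c • g) = c • smul' f g
  assoc : ∀ f g h : PowerSeries A, smul' (smul' f g) h = smul' f (smul' g h)
  star_eq : ∀ f g : A,
      smul' (PowerSeries.C f) (PowerSeries.C g) = PowerSeries.mk fun n => B n f g
  B_zero : ∀ f g : A, B 0 f g = f * g

/-!
Comparing the coefficients of `ℏ²` in `(f * g) * h = f * (g * h)` shows that the associator of
`B₁` is the Hochschild coboundary of `B₂`. Over a commutative algebra the cyclic sum of any
Hochschild coboundary is invariant under transposing two arguments, so `B₁` is a Lie-admissible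
product, and the commutator bracket of a Lie-admissible product satisfies the Jacobi identity.
-/

def hochschildCoboundary {A : Type*} [Ring A] (c : A → A → A) (x y z : A) : A :=
  x * c y z - c (x * y) z + c x (y * z) - c x y * z

theorem hochschildCoboundary_cyclic_sum_swap {A : Type*} [CommRing A] (c : A → A → A)
    (x y z : A) :
    hochschildCoboundary c x y z + hochschildCoboundary c z x y + hochschildCoboundary c y z x =
      hochschildCoboundary c y x z + hochschildCoboundary c z y x +
        hochschildCoboundary c x z y := by
  simp only [hochschildCoboundary, mul_comm y x, mul_comm z y, mul_comm z x]
  ring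

namespace PowerSeries

variable {k A : Type*} [CommSemiring k] [CommSemiring A] [Algebra k A]

theorem X_pow_smul_eq_X_pow_mul (m : ℕ) (f : A⟦X⟧) :
    (X : k⟦X⟧) ^ m • f = X ^ m * f := by
  rw [Algebra.smul_def, algebraMap_apply'', map_pow, map_X]

theorem eq_sum_X_pow_smul_C_add_X_pow_smul_shift (n : ℕ) (f : A⟦X⟧) :
    f = ∑ i ∈ Finset.range n, (X : k⟦X⟧) ^ i • C (coeff i f)
      + (X : k⟦X⟧) ^ n • mk fun j => coeff (j + n) f := by
  ext m
  simp only [X_pow_smul_eq_X_pow_mul, map_add, map_sum, coeff_X_pow_mul', coeff_C, coeff_mk]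
  rcases lt_or_ge m n with h | h
  · rw [Finset.sum_eq_single_of_mem m (Finset.mem_range.2 h) fun i _ hi => by grind]
    simp [h.not_ge]
  · rw [Finset.sum_eq_zero fun i hi => by grind, if_pos h, Nat.sub_add_cancel h, zero_add]

end PowerSeries

namespace FormalStarProduct

open PowerSeries Finset

variable {k A : Type*} [CommRing k] [CommRing A] [Algebra k A] (S : FormalStarProduct k A)

theorem smul'_sum_left {ι : Type*} (s : Finset ι) (f : ι → A⟦X⟧) (g : A⟦X⟧) :
    S.smul' (∑ i ∈ s, f i) g = ∑ i ∈ s, S.smul' (f i) g :=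
  map_sum (AddMonoidHom.mk' (S.smul' · g) fun a b => S.add_left a b g) f s

theorem smul'_sum_right {ι : Type*} (s : Finset ι) (f : A⟦X⟧) (g : ι → A⟦X⟧) :
    S.smul' f (∑ i ∈ s, g i) = ∑ i ∈ s, S.smul' f (g i) :=
  map_sum (AddMonoidHom.mk' (S.smul' f) (S.add_right f)) g s

/- `smul'` is only `k⟦ℏ⟧`-bilinear, not continuous: split off the tail `ℏⁿ⁺¹ • _`, which cannot
reach the coefficient of `ℏⁿ`, and expand the rest by additivity. -/
theorem coeff_smul'_C_right (f : A⟦X⟧) (z : A) (n : ℕ) :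
    coeff n (S.smul' f (C z)) = ∑ p ∈ antidiagonal n, S.B p.2 (coeff p.1 f) z := by
  conv_lhs => rw [eq_sum_X_pow_smul_C_add_X_pow_smul_shift (k := k) (n + 1) f]
  rw [S.add_left, smul'_sum_left]
  simp only [S.hbar_smul_left, S.star_eq]
  simp only [X_pow_smul_eq_X_pow_mul, map_add, map_sum, coeff_X_pow_mul', coeff_mk,
    Nat.not_succ_le_self, if_false, add_zero,
    Nat.sum_antidiagonal_eq_sum_range_succ fun i j => S.B j (coeff i f) z]
  exact sum_congr rfl fun i hi => if_pos (Nat.lt_succ_iff.mp (mem_range.mp hi))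

theorem coeff_smul'_C_left (x : A) (g : A⟦X⟧) (n : ℕ) :
    coeff n (S.smul' (C x) g) = ∑ p ∈ antidiagonal n, S.B p.2 x (coeff p.1 g) := by
  conv_lhs => rw [eq_sum_X_pow_smul_C_add_X_pow_smul_shift (k := k) (n + 1) g]
  rw [S.add_right, smul'_sum_right]
  simp only [S.hbar_smul_right, S.star_eq]
  simp only [X_pow_smul_eq_X_pow_mul, map_add, map_sum, coeff_X_pow_mul', coeff_mk,
    Nat.not_succ_le_self, if_false, add_zero,
    Nat.sum_antidiagonal_eq_sum_range_succ fun i j => S.B j x (coeff i g)]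
  exact sum_congr rfl fun i hi => if_pos (Nat.lt_succ_iff.mp (mem_range.mp hi))

theorem B_one_associator (x y z : A) :
    S.B 1 (S.B 1 x y) z - S.B 1 x (S.B 1 y z) = hochschildCoboundary (S.B 2 · ·) x y z := by
  have h := congrArg (coeff 2) (S.assoc (C x) (C y) (C z))
  rw [S.star_eq, S.star_eq, coeff_smul'_C_right, coeff_smul'_C_left] at h
  simp only [Nat.sum_antidiagonal_succ, Nat.antidiagonal_zero, sum_singleton, coeff_mk,
    S.B_zero] at h
  rw [hochschildCoboundary]
  linear_combination h

/-- `A` as a non-associative ring under `B₁`; `{f, g}` is its commutator bracket. -/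
def FirstOrder (_ : FormalStarProduct k A) : Type _ := A

instance : AddCommGroup S.FirstOrder := inferInstanceAs (AddCommGroup A)

instance : Mul S.FirstOrder := ⟨fun x y => S.B 1 x y⟩

instance : NonUnitalNonAssocRing S.FirstOrder where
  left_distrib x y z := map_add (S.B 1 x) y z
  right_distrib x y z := LinearMap.map_add₂ (S.B 1) x y z
  zero_mul x := LinearMap.map_zero₂ (S.B 1) x
  mul_zero x := map_zero (S.B 1 x)

theorem firstOrder_associator (x y z : S.FirstOrder) :
    associator x y z = hochschildCoboundary (S.B 2 · ·) x y z :=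
  S.B_one_associator x y z

instance : LieAdmissibleRing S.FirstOrder where
  assoc_def x y z := by
    simp only [firstOrder_associator]
    exact hochschildCoboundary_cyclic_sum_swap (S.B 2 · ·) x y z

end FormalStarProduct

/-- the bracket `{f,g} := B₁(f,g) − B₁(g,f)` induced by a formal star
product satisfies the Jacobi identity. -/
theorem formalStarProduct_bracket_jacobi
    {k A : Type*} [CommRing k] [CommRing A] [Algebra k A]
    (S : FormalStarProduct k A)
    (br : A → A → A) (hbr : ∀ f g : A, br f g = S.B 1 f g - S.B 1 g f)
    (f g h : A) :
    br f (br g h) + br g (br h f) + br h (br f g) = 0 := by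
  simp only [hbr]
  exact lie_jacobi (L := S.FirstOrder) f g h
end

section
/- Let k be a commutative ring and H a bialgebra over k with multiplication m, comultiplication Δ : H → H ⊗ H and counit ε : H → k. Let F be an invertible element of the algebra H ⊗ H satisfying the twist equation ((Δ ⊗ id)(F))·(F ⊗ 1) = ((id ⊗ Δ)(F))·(1 ⊗ F) in H ⊗ H ⊗ H, together with the counit normalizations (ε ⊗ id)(F) = 1 and (id ⊗ ε)(F) = 1. Then H, with its original algebra structure, the twisted comultiplication Δ_F(h) := F⁻¹ · Δ(h) · F, and the original counit ε, is again a bialgebra over k; in particular Δ_F is a coassociative algebra homomorphism H → H ⊗ H and ε satisfies the counit axioms (ε ⊗ id) ∘ Δ_F = id = (id ⊗ ε) ∘ Δ_F. -/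
/-!
`Δ_F` is `Δ` followed by the inner automorphism `x ↦ F⁻¹ x F` of `H ⊗ H`, hence an algebra
map. Tensoring with `id` turns conjugation by `F` into conjugation by `F ⊗ 1` (resp. `1 ⊗ F`),
so `(Δ_F ⊗ id) Δ_F` and `(id ⊗ Δ_F) Δ_F` are the conjugates of `(Δ ⊗ id) Δ = (id ⊗ Δ) Δ` by
`(Δ ⊗ id)(F) (F ⊗ 1)` and `(id ⊗ Δ)(F) (1 ⊗ F)`; the twist equation says that these agree.
Applying `ε` to one tensor leg is an algebra map sending `F` to `1`, so it does not see the
conjugation.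
-/

open TensorProduct

section InnerAut

variable (R : Type*) {A B : Type*} [CommSemiring R] [Semiring A] [Semiring B] [Algebra R A]
  [Algebra R B]

def Units.innerAut (u : Aˣ) : A ≃ₐ[R] A :=
  MulSemiringAction.toAlgEquiv R A (ConjAct.toConjAct u)

variable {R}

@[simp]
lemma Units.innerAut_apply (u : Aˣ) (x : A) : u.innerAut R x = u * x * ↑u⁻¹ := rfl

lemma AlgHom.comp_innerAut (φ : A →ₐ[R] B) (u : Aˣ) :
    φ.comp (u.innerAut R).toAlgHom
      = ((Units.map φ.toMonoidHom u).innerAut R).toAlgHom.comp φ := by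
  ext x
  simp

lemma AlgHom.innerAut_comp_comp_innerAut_comp {C : Type*} [Semiring C] [Algebra R C]
    (φ : B →ₐ[R] C) (ψ : A →ₐ[R] B) (u : Cˣ) (w : Bˣ) :
    ((u.innerAut R).toAlgHom.comp φ).comp ((w.innerAut R).toAlgHom.comp ψ)
      = ((u * Units.map φ.toMonoidHom w).innerAut R).toAlgHom.comp (φ.comp ψ) := by
  ext x
  simp [mul_assoc]

lemma AlgHom.map_val_inv_eq_one (φ : A →ₐ[R] B) {u : Aˣ} (hu : φ u = 1) : φ ↑u⁻¹ = 1 :=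
  calc φ ↑u⁻¹ = φ u * φ ↑u⁻¹ := by rw [hu, one_mul]
    _ = 1 := by rw [← map_mul, Units.mul_inv, map_one]

lemma AlgHom.map_innerAut_of_map_eq_one (φ : A →ₐ[R] B) {u : Aˣ} (hu : φ u = 1) (x : A) :
    φ (u.innerAut R x) = φ x := by
  simp [hu, φ.map_val_inv_eq_one hu]

variable (C : Type*) [Semiring C] [Algebra R C]

lemma Algebra.TensorProduct.map_innerAut_comp_id (u : Bˣ) (φ : A →ₐ[R] B) :
    map ((u.innerAut R).toAlgHom.comp φ) (AlgHom.id R C)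
      = ((Units.map (includeLeft : B →ₐ[R] B ⊗[R] C).toMonoidHom u).innerAut R).toAlgHom.comp
          (map φ (AlgHom.id R C)) :=
  ext' fun a c => by simp

lemma Algebra.TensorProduct.map_id_innerAut_comp (u : Bˣ) (φ : A →ₐ[R] B) :
    map (AlgHom.id R C) ((u.innerAut R).toAlgHom.comp φ)
      = ((Units.map (includeRight : B →ₐ[R] C ⊗[R] B).toMonoidHom u).innerAut R).toAlgHom.comp
          (map (AlgHom.id R C) φ) :=
  ext' fun c a => by simp

end InnerAut

namespace Bialgebra

open Algebra.TensorProduct (map assoc includeLeft includeRight)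

variable {R H : Type*} [CommSemiring R] [Semiring H] [Bialgebra R H]

lemma assoc_comp_map_comulAlgHom_id :
    (assoc R R R H H H).toAlgHom.comp ((map (comulAlgHom R H) (.id R H)).comp (comulAlgHom R H))
      = (map (.id R H) (comulAlgHom R H)).comp (comulAlgHom R H) :=
  AlgHom.toLinearMap_injective Coalgebra.coassoc

def twistComul (F : (H ⊗[R] H)ˣ) : H →ₐ[R] H ⊗[R] H :=
  (F⁻¹.innerAut R).toAlgHom.comp (comulAlgHom R H)

lemma twistComul_apply (F : (H ⊗[R] H)ˣ) (h : H) :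
    twistComul F h = (↑F⁻¹ : H ⊗[R] H) * Coalgebra.comul (R := R) h * F := by
  simp [twistComul]

theorem twistComul_coassoc (F : (H ⊗[R] H)ˣ)
    (htwist : assoc R R R H H H (map (comulAlgHom R H) (.id R H) F * ((F : H ⊗[R] H) ⊗ₜ 1))
      = map (.id R H) (comulAlgHom R H) F * (1 ⊗ₜ (F : H ⊗[R] H))) :
    (assoc R R R H H H).toAlgHom.comp ((map (twistComul F) (.id R H)).comp (twistComul F))
      = (map (.id R H) (twistComul F)).comp (twistComul F) := by
  set Δ := comulAlgHom R H
  set α : (H ⊗[R] H) ⊗[R] H →ₐ[R] H ⊗[R] (H ⊗[R] H) := (assoc R R R H H H).toAlgHom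
  set rΔ : H ⊗[R] H →ₐ[R] (H ⊗[R] H) ⊗[R] H := map Δ (.id R H)
  set lΔ : H ⊗[R] H →ₐ[R] H ⊗[R] (H ⊗[R] H) := map (.id R H) Δ
  set iL : H ⊗[R] H →ₐ[R] (H ⊗[R] H) ⊗[R] H := includeLeft
  set iR : H ⊗[R] H →ₐ[R] H ⊗[R] (H ⊗[R] H) := includeRight
  have htwist_inv :
      Units.map α.toMonoidHom (Units.map iL.toMonoidHom F⁻¹ * Units.map rΔ.toMonoidHom F⁻¹)
        = Units.map iR.toMonoidHom F⁻¹ * Units.map lΔ.toMonoidHom F⁻¹ := by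
    rw [← inv_inj]
    ext
    simp only [map_mul, map_inv, mul_inv_rev, inv_inv, Units.val_mul, Units.coe_map]
    exact (map_mul _ _ _).symm.trans htwist
  simp only [twistComul, Algebra.TensorProduct.map_innerAut_comp_id,
    Algebra.TensorProduct.map_id_innerAut_comp, AlgHom.innerAut_comp_comp_innerAut_comp]
  rw [← AlgHom.comp_assoc, AlgHom.comp_innerAut, AlgHom.comp_assoc, htwist_inv,
    assoc_comp_map_comulAlgHom_id]

lemma map_twistComul_of_map_eq_one {B : Type*} [Semiring B] [Algebra R B]
    (ψ : H ⊗[R] H →ₐ[R] B) {F : (H ⊗[R] H)ˣ} (hF : ψ F = 1) (h : H) :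
    ψ (twistComul F h) = ψ (Coalgebra.comul (R := R) h) := by
  exact ψ.map_innerAut_of_map_eq_one (ψ.map_val_inv_eq_one hF) _

theorem lid_rTensor_counit_twistComul {F : (H ⊗[R] H)ˣ}
    (hF : TensorProduct.lid R H (LinearMap.rTensor H Coalgebra.counit (F : H ⊗[R] H)) = 1)
    (h : H) :
    TensorProduct.lid R H (LinearMap.rTensor H Coalgebra.counit (twistComul F h)) = h := by
  let ψ : H ⊗[R] H →ₐ[R] H :=
    (Algebra.TensorProduct.lid R H).toAlgHom.comp (map (counitAlgHom R H) (.id R H))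
  change ψ (twistComul F h) = h
  rw [map_twistComul_of_map_eq_one ψ hF]
  change TensorProduct.lid R H (LinearMap.rTensor H Coalgebra.counit (Coalgebra.comul h)) = h
  simp [Coalgebra.rTensor_counit_comul]

theorem rid_lTensor_counit_twistComul {F : (H ⊗[R] H)ˣ}
    (hF : _root_.TensorProduct.rid R H (LinearMap.lTensor H Coalgebra.counit (F : H ⊗[R] H)) = 1)
    (h : H) :
    _root_.TensorProduct.rid R H (LinearMap.lTensor H Coalgebra.counit (twistComul F h)) = h := by
  let ψ : H ⊗[R] H →ₐ[R] H :=
    (Algebra.TensorProduct.rid R R H).toAlgHom.comp (map (.id R H) (counitAlgHom R H))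
  change ψ (twistComul F h) = h
  rw [map_twistComul_of_map_eq_one ψ hF]
  change _root_.TensorProduct.rid R H (LinearMap.lTensor H Coalgebra.counit (Coalgebra.comul h)) = h
  simp [Coalgebra.lTensor_counit_comul]

end Bialgebra

/-- Drinfeld twist of a bialgebra. Let `H` be a bialgebra over a commutative
ring `k`, and let `F ∈ H ⊗ H` be invertible (with inverse `Finv`), satisfying the twist
equation `((Δ ⊗ id)(F))·(F ⊗ 1) = ((id ⊗ Δ)(F))·(1 ⊗ F)` in `H ⊗ H ⊗ H` and the counit
normalizations `(ε ⊗ id)(F) = 1`, `(id ⊗ ε)(F) = 1`. Then `H`, with its original algebra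
structure, the twisted comultiplication `Δ_F(h) := F⁻¹·Δ(h)·F`, and the original counit
`ε`, is again a bialgebra: `Δ_F` is a (`k`-linear) coassociative algebra homomorphism
`H → H ⊗ H` and `ε` satisfies the counit axioms `(ε ⊗ id) ∘ Δ_F = id = (id ⊗ ε) ∘ Δ_F`. -/
theorem bialgebra_twist
    (k H : Type*) [CommRing k] [Ring H] [Bialgebra k H]
    (F Finv : H ⊗[k] H)
    (hFinv : F * Finv = 1) (hFinv' : Finv * F = 1)
    (htwist : (Algebra.TensorProduct.assoc k k k H H H)
        ((LinearMap.rTensor H (Coalgebra.comul (R := k) (A := H)) F) * (F ⊗ₜ[k] (1 : H)))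
      = (LinearMap.lTensor H (Coalgebra.comul (R := k) (A := H)) F) * ((1 : H) ⊗ₜ[k] F))
    (hcounit_l : (TensorProduct.lid k H)
        (LinearMap.rTensor H (Coalgebra.counit (R := k) (A := H)) F) = 1)
    (hcounit_r : (TensorProduct.rid k H)
        (LinearMap.lTensor H (Coalgebra.counit (R := k) (A := H)) F) = 1)
    -- the twisted comultiplication `Δ_F(h) = F⁻¹ · Δ(h) · F`, as a `k`-linear map
    (ΔF : H →ₗ[k] H ⊗[k] H)
    (hΔF : ∀ h : H, ΔF h = Finv * (Coalgebra.comul (R := k) (A := H) h) * F) :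
    -- `Δ_F` is an algebra homomorphism: it preserves `1` and multiplication
    ΔF 1 = 1 ∧
    (∀ a b : H, ΔF (a * b) = ΔF a * ΔF b) ∧
    -- `Δ_F` is coassociative
    ((TensorProduct.assoc k H H H).toLinearMap ∘ₗ (LinearMap.rTensor H ΔF) ∘ₗ ΔF
      = (LinearMap.lTensor H ΔF) ∘ₗ ΔF) ∧
    -- the original counit `ε` is a counit for `Δ_F`
    (∀ h : H, (TensorProduct.lid k H)
        (LinearMap.rTensor H (Coalgebra.counit (R := k) (A := H)) (ΔF h)) = h) ∧
    (∀ h : H, (TensorProduct.rid k H)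
        (LinearMap.lTensor H (Coalgebra.counit (R := k) (A := H)) (ΔF h)) = h) := by
  let u : (H ⊗[k] H)ˣ := ⟨F, Finv, hFinv, hFinv'⟩
  obtain rfl : ΔF = (Bialgebra.twistComul u).toLinearMap :=
    LinearMap.ext fun h => (hΔF h).trans (Bialgebra.twistComul_apply u h).symm
  exact ⟨map_one (Bialgebra.twistComul u), map_mul (Bialgebra.twistComul u),
    congr(($(Bialgebra.twistComul_coassoc u htwist)).toLinearMap),
    Bialgebra.lid_rTensor_counit_twistComul hcounit_l,
    Bialgebra.rid_lTensor_counit_twistComul hcounit_r⟩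
end
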